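/- arXiv:2502.19583 — 2 statements merged into one kernel-verified Lean document; each statement's English description precedes it below -/
import Mathlib

section
/- Backtracking line search terminates: if φ : ℝⁿ → ℝ is differentiable at u, p satisfies ∇φ(u)ᵀp < 0, c ∈ (0,1), and τ ∈ (0,1), then there exists k ∈ ℕ such that the step α = τ^k α₀ satisfies φ(u) - φ(u + α p) ≥ -c α ∇φ(u)ᵀp. -/
/-!
The difference quotients of `t ↦ φ (u + t • p)` at `0⁺` tend to the directional derivative
`D = ⟪∇φ(u), p⟫ < 0`, which is strictly below `c * D` because `c < 1`. So the Armijo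
inequality holds for all small enough positive steps, and the steps `τ ^ k * α₀` tend to `0⁺`.
-/

open Filter Topology

theorem HasLineDerivAt.eventually_armijo {E : Type*} [AddCommGroup E] [Module ℝ E]
    {f : E → ℝ} {D c : ℝ} {x v : E} (hf : HasLineDerivAt ℝ f D x v) (hD : D < 0) (hc : c < 1) :
    ∀ᶠ t in 𝓝[>] 0, f (x + t • v) ≤ f x + c * t * D := by
  have hslope : ∀ᶠ t in 𝓝[>] (0 : ℝ), t⁻¹ • (f (x + t • v) - f x) < c * D :=
    hf.tendsto_slope_zero_right.eventually (gt_mem_nhds (by nlinarith))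
  filter_upwards [hslope, self_mem_nhdsWithin] with t ht (htpos : 0 < t)
  rw [smul_eq_mul, inv_mul_lt_iff₀ htpos] at ht
  linarith

theorem tendsto_pow_mul_atTop_nhdsGT_zero {τ a : ℝ} (hτ₀ : 0 < τ) (hτ₁ : τ < 1) (ha : 0 < a) :
    Tendsto (fun k : ℕ => τ ^ k * a) atTop (𝓝[>] 0) :=
  tendsto_nhdsWithin_of_tendsto_nhds_of_eventually_within _
    (by simpa using (tendsto_pow_atTop_nhds_zero_of_lt_one hτ₀.le hτ₁).mul_const a)
    (Eventually.of_forall fun k => mul_pos (pow_pos hτ₀ k) ha)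

theorem stmt_5 {n : ℕ}
    (φ : EuclideanSpace ℝ (Fin n) → ℝ) (u p : EuclideanSpace ℝ (Fin n))
    (hφ : DifferentiableAt ℝ φ u)
    (hdesc : inner ℝ (gradient φ u) p < (0 : ℝ))
    (c τ α₀ : ℝ) (hc : c ∈ Set.Ioo (0 : ℝ) 1) (hτ : τ ∈ Set.Ioo (0 : ℝ) 1)
    (hα₀ : 0 < α₀) :
    ∃ k : ℕ,
      φ u - φ (u + (τ ^ k * α₀) • p) ≥
        -c * (τ ^ k * α₀) * inner ℝ (gradient φ u) p := by
  have hline : HasLineDerivAt ℝ φ (inner ℝ (gradient φ u) p) u p := by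
    rw [inner_gradient_left]
    exact hφ.hasFDerivAt.hasLineDerivAt p
  obtain ⟨k, hk⟩ := ((tendsto_pow_mul_atTop_nhdsGT_zero hτ.1 hτ.2 hα₀).eventually
    (hline.eventually_armijo hdesc hc.2)).exists
  exact ⟨k, by linarith⟩
end

section
/- Least-change property of the Broyden update: among all matrices M ∈ ℝ^{n×n} satisfying the secant equation M s = y (with s ≠ 0), the Broyden update B' = B + ((y - Bs)sᵀ)/(sᵀs) minimizes the Frobenius norm ‖M - B‖_F; that is, ‖B' - B‖_F ≤ ‖M - B‖_F for all M with M s = y. -/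
/-!
Write `E = M - B`. The secant equation turns the Broyden correction into
`(sᵀs)⁻¹ (E s) sᵀ`, whose Frobenius norm is at most `(sᵀs)⁻¹ ‖E‖ ‖s‖²` by submultiplicativity
of the Frobenius norm (applied to `E s` and to the rank-one product `(E s) sᵀ`), i.e. at most `‖E‖`.
-/

open Matrix

/-- Frobenius norm of a real square matrix. -/
noncomputable def frobNorm {n : ℕ} (A : Matrix (Fin n) (Fin n) ℝ) : ℝ :=
  Real.sqrt (∑ i, ∑ j, (A i j) ^ 2)

attribute [local instance] Matrix.frobeniusNormedAddCommGroup Matrix.frobeniusNormedSpace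

namespace Matrix

variable {m n 𝕜 : Type*} [Fintype m] [Fintype n] [RCLike 𝕜]

theorem frobenius_norm_mulVec_le (A : Matrix m n 𝕜) (v : n → 𝕜) :
    ‖WithLp.toLp 2 (A *ᵥ v)‖ ≤ ‖A‖ * ‖WithLp.toLp 2 v‖ := by
  simpa [← replicateCol_mulVec (ι := Unit)] using frobenius_norm_mul A (replicateCol Unit v)

theorem frobenius_norm_vecMulVec_le (u : m → 𝕜) (v : n → 𝕜) :
    ‖vecMulVec u v‖ ≤ ‖WithLp.toLp 2 u‖ * ‖WithLp.toLp 2 v‖ := by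
  simpa [vecMulVec_eq Unit] using frobenius_norm_mul (replicateCol Unit u) (replicateRow Unit v)

theorem dotProduct_self_eq_norm_sq (v : n → ℝ) : v ⬝ᵥ v = ‖WithLp.toLp 2 v‖ ^ 2 := by
  rw [← real_inner_self_eq_norm_sq, EuclideanSpace.inner_toLp_toLp, star_trivial]

theorem frobenius_norm_smul_vecMulVec_mulVec_le (E : Matrix m n ℝ) (s : n → ℝ) :
    ‖(s ⬝ᵥ s)⁻¹ • vecMulVec (E *ᵥ s) s‖ ≤ ‖E‖ := by
  set r := ‖WithLp.toLp 2 s‖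
  calc ‖(s ⬝ᵥ s)⁻¹ • vecMulVec (E *ᵥ s) s‖
      = (r ^ 2)⁻¹ * ‖vecMulVec (E *ᵥ s) s‖ := by
        rw [norm_smul, dotProduct_self_eq_norm_sq, norm_inv, norm_pow,
          Real.norm_of_nonneg (norm_nonneg _)]
    _ ≤ (r ^ 2)⁻¹ * (‖E‖ * r * r) := by
        gcongr
        exact (frobenius_norm_vecMulVec_le _ _).trans
          (mul_le_mul_of_nonneg_right (frobenius_norm_mulVec_le E s) (norm_nonneg _))
    _ ≤ ‖E‖ := by
        rw [mul_assoc, ← sq, mul_left_comm]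
        exact mul_le_of_le_one_right (norm_nonneg E) (inv_mul_le_one_of_le₀ le_rfl (sq_nonneg r))

end Matrix

theorem frobNorm_eq_norm {n : ℕ} (A : Matrix (Fin n) (Fin n) ℝ) : frobNorm A = ‖A‖ := by
  simp [frobNorm, frobenius_norm_def, Real.sqrt_eq_rpow]

theorem stmt_8_general {n : ℕ} (B : Matrix (Fin n) (Fin n) ℝ) (s y : Fin n → ℝ) :
    ∀ M : Matrix (Fin n) (Fin n) ℝ, M *ᵥ s = y →
      frobNorm ((B + (s ⬝ᵥ s)⁻¹ • Matrix.vecMulVec (y - B *ᵥ s) s) - B) ≤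
        frobNorm (M - B) := by
  intro M hM
  have hcorrection : B + (s ⬝ᵥ s)⁻¹ • vecMulVec (y - B *ᵥ s) s - B
      = (s ⬝ᵥ s)⁻¹ • vecMulVec ((M - B) *ᵥ s) s := by
    rw [sub_mulVec, hM, add_sub_cancel_left]
  rw [frobNorm_eq_norm, frobNorm_eq_norm, hcorrection]
  exact frobenius_norm_smul_vecMulVec_mulVec_le (M - B) s

theorem stmt_8 {n : ℕ} (B : Matrix (Fin n) (Fin n) ℝ) (s y : Fin n → ℝ)
    (hs : s ≠ 0) :
    ∀ M : Matrix (Fin n) (Fin n) ℝ, M *ᵥ s = y →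
      frobNorm ((B + (s ⬝ᵥ s)⁻¹ • Matrix.vecMulVec (y - B *ᵥ s) s) - B) ≤
        frobNorm (M - B) :=
  stmt_8_general B s y
end
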